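/- arXiv:0807.4123 — 2 statements merged into one kernel-verified Lean document; each statement's English description precedes it below -/
import Mathlib

section
/- Let V be a commutative unital quantale, Φ a class of V-distributors satisfying (Ax1)–(Ax3), and f : (X,a) → (Y,b), g : (Y,b) → (Z,c), h : (X,a) → (Z,c) V-functors with g ∘ f ≅ h. Then: (1) if f and g are Φ-dense, so is h; (2) if h is Φ-dense and g is fully faithful, then f is Φ-dense; (3) if h is Φ-dense and f is dense, then g is Φ-dense. -/
universe u

/-- A commutative unital quantale: a complete lattice with a commutative monoid
structure whose multiplication distributes over arbitrary suprema. -/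
class CommQuantale (V : Type u) extends CompleteLattice V, CommMonoid V where
  mul_sSup : ∀ (x : V) (s : Set V), x * sSup s = ⨆ v ∈ s, x * v

variable {V : Type u} [CommQuantale V]

/-- The internal hom of the quantale: `qhom u v = sSup {w | u * w ≤ v}`. -/
def qhom (u v : V) : V := sSup {w | u * w ≤ v}

theorem mul_iSup' {ι : Sort*} (u : V) (v : ι → V) : u * (⨆ i, v i) = ⨆ i, u * v i := by
  rw [iSup, CommQuantale.mul_sSup, iSup_range]

theorem mul_mono_right' (u : V) {w w' : V} (h : w ≤ w') : u * w ≤ u * w' := by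
  have hs : sSup ({w, w'} : Set V) = w' := by
    apply le_antisymm
    · exact sSup_le (by rintro x (rfl | rfl); exacts [h, le_rfl])
    · exact le_sSup (by simp)
  have hm := CommQuantale.mul_sSup u ({w, w'} : Set V)
  rw [hs] at hm
  rw [hm]
  exact le_iSup₂ (f := fun v (_ : v ∈ ({w, w'} : Set V)) => u * v) w (by simp)

theorem mul_mono_left' {w w' : V} (h : w ≤ w') (u : V) : w * u ≤ w' * u := by
  rw [mul_comm w u, mul_comm w' u]; exact mul_mono_right' u h

theorem le_qhom_iff {u v w : V} : w ≤ qhom u v ↔ u * w ≤ v := by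
  constructor
  · intro h
    have h2 : u * qhom u v ≤ v := by
      rw [qhom, CommQuantale.mul_sSup]
      exact iSup₂_le fun w hw => hw
    exact le_trans (mul_mono_right' u h) h2
  · intro h; exact le_sSup h

theorem bot_mul' (u : V) : (⊥ : V) * u = ⊥ := by
  rw [mul_comm]
  have hm := CommQuantale.mul_sSup u (∅ : Set V)
  simpa using hm

/-- A `V`-category structure on `X`. -/
structure VCatStr (V : Type u) [CommQuantale V] (X : Type u) where
  hom : X → X → V
  refl : ∀ x, (1 : V) ≤ hom x x
  comp : ∀ x y z, hom x y * hom y z ≤ hom x z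

/-- `V`-functoriality. -/
def IsVFunctor {X Y : Type u} (a : VCatStr V X) (b : VCatStr V Y) (f : X → Y) : Prop :=
  ∀ x x', a.hom x x' ≤ b.hom (f x) (f x')

/-- `φ` is a `V`-distributor `(X,a) ⇸ (Y,b)`. -/
def IsDist {X Y : Type u} (a : VCatStr V X) (b : VCatStr V Y) (φ : X → Y → V) : Prop :=
  (∀ x' x y, a.hom x' x * φ x y ≤ φ x' y) ∧ (∀ x y y', φ x y * b.hom y y' ≤ φ x y')

/-- Composite `ψ ∘ φ` of distributors (`φ` first). -/
def dComp {X Y Z : Type u} (ψ : Y → Z → V) (φ : X → Y → V) : X → Z → V :=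
  fun x z => ⨆ y, φ x y * ψ y z

/-- The extension `γ ⟜ α`. -/
def dExt {X Y Z : Type u} (γ : X → Z → V) (α : X → Y → V) : Y → Z → V :=
  fun y z => ⨅ x, qhom (α x y) (γ x z)

/-- `f_*`. -/
def fStar {X Y : Type u} (b : VCatStr V Y) (f : X → Y) : X → Y → V :=
  fun x y => b.hom (f x) y

/-- `f^*`. -/
def fCostar {X Y : Type u} (b : VCatStr V Y) (f : X → Y) : Y → X → V :=
  fun y x => b.hom y (f x)

/-- `ψ ⊣ φ` is an adjunction of distributors, `ψ : (A,α) ⇸ (B,β)`, `φ : (B,β) ⇸ (A,α)`. -/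
def DistAdj {A B : Type u} (α : VCatStr V A) (β : VCatStr V B)
    (ψ : A → B → V) (φ : B → A → V) : Prop :=
  (∀ x x', α.hom x x' ≤ ⨆ y, ψ x y * φ y x') ∧
  (∀ y y', (⨆ x, φ y x * ψ x y') ≤ β.hom y y')

/-- `φ : (B,β) ⇸ (A,α)` is a right adjoint distributor. -/
def IsRightAdjDist {A B : Type u} (β : VCatStr V B) (α : VCatStr V A) (φ : B → A → V) : Prop :=
  ∃ ψ : A → B → V, IsDist α β ψ ∧ DistAdj α β ψ φ

/-- The pointwise order on `V`-functors. -/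
def VLe {X Y : Type u} (b : VCatStr V Y) (f g : X → Y) : Prop :=
  ∀ x, (1 : V) ≤ b.hom (f x) (g x)

/-- Equivalence of `V`-functors. -/
def VEquiv {X Y : Type u} (b : VCatStr V Y) (f g : X → Y) : Prop :=
  VLe b f g ∧ VLe b g f

def FullyFaithful {X Y : Type u} (a : VCatStr V X) (b : VCatStr V Y) (f : X → Y) : Prop :=
  ∀ x x', b.hom (f x) (f x') = a.hom x x'

def DenseF {X Y : Type u} (b : VCatStr V Y) (f : X → Y) : Prop :=
  ∀ y y', (⨆ x, b.hom y (f x) * b.hom (f x) y') = b.hom y y'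

/-- `f` is a left adjoint `V`-functor. -/
def LeftAdjointF {X Y : Type u} (a : VCatStr V X) (b : VCatStr V Y) (f : X → Y) : Prop :=
  ∃ g : Y → X, IsVFunctor b a g ∧ (∀ x, (1 : V) ≤ a.hom x (g (f x))) ∧
    (∀ y, (1 : V) ≤ b.hom (f (g y)) y)

/-- The one-point `V`-category `G`. -/
def unitCat (V : Type u) [CommQuantale V] : VCatStr V PUnit where
  hom _ _ := 1
  refl _ := le_refl 1
  comp _ _ _ := (one_mul 1).le

/-- Presheaves on `(X,a)`: distributors `(X,a) ⇸ G`. -/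
def IsPresheaf {X : Type u} (a : VCatStr V X) (ψ : X → V) : Prop :=
  ∀ x' x, a.hom x' x * ψ x ≤ ψ x'

/-- A class of `V`-distributors: for each pair of `V`-categories a predicate on maps. -/
def DistClass (V : Type u) [CommQuantale V] : Type (u + 1) :=
  ∀ ⦃X Y : Type u⦄, VCatStr V X → VCatStr V Y → (X → Y → V) → Prop

/-- The presheaf `ψ`, seen as distributor into `G`, lies in `Φ`. -/
def InPhi (Φ : DistClass V) {X : Type u} (a : VCatStr V X) (ψ : X → V) : Prop :=
  Φ a (unitCat V) (fun x _ => ψ x)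

/-- Axioms (Ax1)–(Ax3) on a class of distributors. -/
structure DistAx (Φ : DistClass V) : Prop where
  ax1 : ∀ {X Y : Type u} (a : VCatStr V X) (b : VCatStr V Y) (f : X → Y),
      IsVFunctor a b f → Φ b a (fCostar b f)
  ax2_left : ∀ {W X Y : Type u} (d : VCatStr V W) (a : VCatStr V X) (b : VCatStr V Y)
      (φ : W → Y → V) (f : X → Y), IsDist d b φ → IsVFunctor a b f → Φ d b φ →
      Φ d a (dComp (fCostar b f) φ)
  ax2_right : ∀ {X Y Z : Type u} (a : VCatStr V X) (b : VCatStr V Y) (c : VCatStr V Z)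
      (φ : X → Z → V) (f : X → Y), IsDist a c φ → IsVFunctor a b f → Φ a c φ →
      Φ b c (dComp φ (fCostar b f))
  ax2_star : ∀ {W X Z : Type u} (d : VCatStr V W) (a : VCatStr V X) (c : VCatStr V Z)
      (φ : X → Z → V) (f : W → X), IsDist a c φ → IsVFunctor d a f → Φ a c φ →
      Φ d a (fStar a f) → Φ d c (dComp φ (fStar a f))
  ax3 : ∀ {X Y : Type u} (a : VCatStr V X) (b : VCatStr V Y) (φ : X → Y → V),
      IsDist a b φ → (∀ y, Φ a (unitCat V) (fun x _ => φ x y)) → Φ a b φ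

/-- Axiom (Ax4): `f_* ∈ Φ` for every surjective `V`-functor `f`. -/
def Ax4 (Φ : DistClass V) : Prop :=
  ∀ {X Y : Type u} (a : VCatStr V X) (b : VCatStr V Y) (f : X → Y),
    IsVFunctor a b f → Function.Surjective f → Φ a b (fStar b f)

/-- `f` is `Φ`-dense. -/
def PhiDense (Φ : DistClass V) {X Y : Type u} (a : VCatStr V X) (b : VCatStr V Y)
    (f : X → Y) : Prop :=
  Φ a b (fStar b f)

/-- The `V`-category structure on `X → V`. -/
def funCat (V : Type u) [CommQuantale V] (X : Type u) : VCatStr V (X → V) where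
  hom ψ ψ' := ⨅ x, qhom (ψ x) (ψ' x)
  refl ψ := le_iInf fun x => le_qhom_iff.mpr (mul_one _).le
  comp ψ χ ω := le_iInf fun x => le_qhom_iff.mpr <| by
    calc ψ x * ((⨅ x', qhom (ψ x') (χ x')) * (⨅ x', qhom (χ x') (ω x')))
        = (ψ x * (⨅ x', qhom (ψ x') (χ x'))) * (⨅ x', qhom (χ x') (ω x')) :=
          (mul_assoc _ _ _).symm
      _ ≤ χ x * (⨅ x', qhom (χ x') (ω x')) :=
          mul_mono_left' (le_qhom_iff.mp (iInf_le (fun x' => qhom (ψ x') (χ x')) x)) _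
      _ ≤ ω x := le_qhom_iff.mp (iInf_le (fun x' => qhom (χ x') (ω x')) x)

/-- Full sub-`V`-category on a predicate. -/
def subCat {X : Type u} (a : VCatStr V X) (P : X → Prop) : VCatStr V {x : X // P x} where
  hom x y := a.hom x.1 y.1
  refl x := a.refl x.1
  comp x y z := a.comp x.1 y.1 z.1

/-- Carrier of the presheaf `V`-category `PX`. -/
def PCarrier {X : Type u} (a : VCatStr V X) : Type u := {ψ : X → V // IsPresheaf a ψ}

/-- The presheaf `V`-category `PX`. -/
def pCat {X : Type u} (a : VCatStr V X) : VCatStr V (PCarrier a) :=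
  subCat (funCat V X) (IsPresheaf a)

/-- Carrier of `ΦX`: presheaves lying in `Φ`. -/
def PhiCarrier (Φ : DistClass V) {X : Type u} (a : VCatStr V X) : Type u :=
  {ψ : X → V // IsPresheaf a ψ ∧ InPhi Φ a ψ}

/-- The `V`-category `ΦX`. -/
def phiCat (Φ : DistClass V) {X : Type u} (a : VCatStr V X) : VCatStr V (PhiCarrier Φ a) :=
  subCat (funCat V X) fun ψ => IsPresheaf a ψ ∧ InPhi Φ a ψ

/-- The inclusion `ΦX → PX`. -/
def phiIncl (Φ : DistClass V) {X : Type u} (a : VCatStr V X) : PhiCarrier Φ a → PCarrier a :=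
  fun ψ => ⟨ψ.1, ψ.2.1⟩

/-- The corestricted Yoneda functor `y^Φ_X : X → ΦX`. -/
def yPhi (Φ : DistClass V) (hΦ : DistAx Φ) {X : Type u} (a : VCatStr V X) (x : X) :
    PhiCarrier Φ a :=
  ⟨fun x' => a.hom x' x,
   fun x' x'' => a.comp x' x'' x,
   hΦ.ax1 (unitCat V) a (fun _ => x) (fun _ _ => a.refl x)⟩

/-- `Φf : ΦX → ΦY`, `ψ ↦ ψ ∘ f^*`. -/
def phiMap (Φ : DistClass V) (hΦ : DistAx Φ) {X Y : Type u} (a : VCatStr V X) (b : VCatStr V Y)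
    (f : X → Y) (hf : IsVFunctor a b f) (ψ : PhiCarrier Φ a) : PhiCarrier Φ b :=
  ⟨fun y => ⨆ x, b.hom y (f x) * ψ.1 x,
   by
    intro y' y
    rw [mul_iSup']
    refine iSup_le fun x => ?_
    refine le_trans ?_ (le_iSup _ x)
    calc b.hom y' y * (b.hom y (f x) * ψ.1 x)
        = (b.hom y' y * b.hom y (f x)) * ψ.1 x := (mul_assoc _ _ _).symm
      _ ≤ b.hom y' (f x) * ψ.1 x := mul_mono_left' (b.comp y' y (f x)) _,
   by
    have hd : IsDist a (unitCat V) (fun x (_ : PUnit) => ψ.1 x) :=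
      ⟨fun x' x _ => ψ.2.1 x' x, fun x _ _ => le_of_eq (mul_one _)⟩
    exact hΦ.ax2_right a b (unitCat V) _ f hd hf ψ.2.2⟩

/-- `g` is the `φ`-weighted colimit of `h`, i.e. `g_* = h_* ⟜ φ`. -/
def IsColimit {Y Z X : Type u} (_b : VCatStr V Y) (_c : VCatStr V Z) (a : VCatStr V X)
    (φ : Y → Z → V) (h : Y → X) (g : Z → X) : Prop :=
  ∀ z x, a.hom (g z) x = ⨅ y, qhom (φ y z) (a.hom (h y) x)

/-- `Φ`-cocompleteness. -/
def PhiCocomplete (Φ : DistClass V) {X : Type u} (a : VCatStr V X) : Prop :=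
  ∀ ⦃Y Z : Type u⦄ (b : VCatStr V Y) (c : VCatStr V Z) (φ : Y → Z → V) (h : Y → X),
    IsDist b c φ → Φ b c φ → IsVFunctor b a h →
    ∃ g : Z → X, IsVFunctor c a g ∧ IsColimit b c a φ h g

/-- `Φ`-cocontinuity. -/
def PhiCocontinuous (Φ : DistClass V) {X X' : Type u} (a : VCatStr V X) (a' : VCatStr V X')
    (f : X → X') : Prop :=
  ∀ ⦃Y Z : Type u⦄ (b : VCatStr V Y) (c : VCatStr V Z) (φ : Y → Z → V) (h : Y → X) (g : Z → X),
    IsDist b c φ → Φ b c φ → IsVFunctor b a h → IsVFunctor c a g →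
    IsColimit b c a φ h g → IsColimit b c a' φ (f ∘ h) (f ∘ g)

/-- `Φ`-injectivity. -/
def PhiInjective (Φ : DistClass V) {X : Type u} (a : VCatStr V X) : Prop :=
  ∀ ⦃A B : Type u⦄ (α : VCatStr V A) (β : VCatStr V B) (f : A → X) (i : A → B),
    IsVFunctor α a f → IsVFunctor α β i → FullyFaithful α β i → PhiDense Φ α β i →
    ∃ g : B → X, IsVFunctor β a g ∧ VEquiv a (g ∘ i) f

/-- Separatedness. -/
def Separated {X : Type u} (a : VCatStr V X) : Prop :=
  ∀ ⦃Y : Type u⦄ (b : VCatStr V Y) (f g : Y → X),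
    IsVFunctor b a f → IsVFunctor b a g → VEquiv a f g → f = g

/-
`f_*` depends only on the isomorphism class of `f`, so `h_*` may be replaced by `(g ∘ f)_*`.
Distributors compose associatively with the hom-structures as identities, and the Yoneda lemma
gives `(g ∘ f)_* = g_* ∘ f_*` and `g^* ∘ ψ = ψ(-, g -)`. Hence `h_* = g_* ∘ f_*`, which is
(Ax2) with `f_*, g_* ∈ Φ`; for `g` fully faithful `f_* = g^* ∘ h_*`; and for `f` dense
`f_* ∘ f^* = b`, so `g_* = g_* ∘ f_* ∘ f^* = h_* ∘ f^*`, again in `Φ` by (Ax2).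
-/

theorem iSup_mul' {ι : Sort*} (v : ι → V) (u : V) : (⨆ i, v i) * u = ⨆ i, v i * u := by
  simp only [mul_comm _ u, mul_iSup']

theorem dComp_assoc {W X Y Z : Type u} (χ : Y → Z → V) (ψ : X → Y → V) (φ : W → X → V) :
    dComp (dComp χ ψ) φ = dComp χ (dComp ψ φ) := by
  funext w z
  simp only [dComp, mul_iSup', iSup_mul', mul_assoc]
  exact iSup_comm

namespace IsDist

variable {X Y : Type u} {a : VCatStr V X} {b : VCatStr V Y} {φ : X → Y → V}

theorem comp_id (hφ : IsDist a b φ) : dComp φ a.hom = φ := by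
  funext x y
  refine le_antisymm (iSup_le fun x' => hφ.1 x x' y) ?_
  calc φ x y = 1 * φ x y := (one_mul _).symm
    _ ≤ a.hom x x * φ x y := mul_mono_left' (a.refl x) _
    _ ≤ dComp φ a.hom x y := le_iSup (fun x' => a.hom x x' * φ x' y) x

theorem id_comp (hφ : IsDist a b φ) : dComp b.hom φ = φ := by
  funext x y
  refine le_antisymm (iSup_le fun y' => hφ.2 x y' y) ?_
  calc φ x y = φ x y * 1 := (mul_one _).symm
    _ ≤ φ x y * b.hom y y := mul_mono_right' _ (b.refl y)
    _ ≤ dComp b.hom φ x y := le_iSup (fun y' => φ x y' * b.hom y' y) y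

theorem dComp_fStar {W : Type u} (hφ : IsDist a b φ) (f : W → X) :
    dComp φ (fStar a f) = fun w y => φ (f w) y := by
  funext w y
  exact congrFun₂ hφ.comp_id (f w) y

theorem fCostar_dComp {W : Type u} (hφ : IsDist a b φ) (g : W → Y) :
    dComp (fCostar b g) φ = fun x w => φ x (g w) := by
  funext x w
  exact congrFun₂ hφ.id_comp x (g w)

end IsDist

theorem IsVFunctor.comp {X Y Z : Type u} {a : VCatStr V X} {b : VCatStr V Y} {c : VCatStr V Z}
    {f : X → Y} {g : Y → Z} (hg : IsVFunctor b c g) (hf : IsVFunctor a b f) :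
    IsVFunctor a c (g ∘ f) :=
  fun x x' => (hf x x').trans (hg _ _)

theorem isDist_fStar {X Y : Type u} {a : VCatStr V X} (b : VCatStr V Y) {f : X → Y}
    (hf : IsVFunctor a b f) : IsDist a b (fStar b f) :=
  ⟨fun x' x _ => (mul_mono_left' (hf x' x) _).trans (b.comp _ _ _),
   fun _ _ _ => b.comp _ _ _⟩

theorem fStar_le_of_vLe {X Y : Type u} (b : VCatStr V Y) {f f' : X → Y} (hle : VLe b f' f) :
    fStar b f ≤ fStar b f' := fun x y =>
  calc b.hom (f x) y = 1 * b.hom (f x) y := (one_mul _).symm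
    _ ≤ b.hom (f' x) (f x) * b.hom (f x) y := mul_mono_left' (hle x) _
    _ ≤ b.hom (f' x) y := b.comp _ _ _

theorem fStar_eq_of_vEquiv {X Y : Type u} (b : VCatStr V Y) {f f' : X → Y}
    (hf : VEquiv b f f') : fStar b f = fStar b f' :=
  le_antisymm (fStar_le_of_vLe b hf.2) (fStar_le_of_vLe b hf.1)

theorem fStar_comp {X Y Z : Type u} {b : VCatStr V Y} (c : VCatStr V Z) (f : X → Y)
    {g : Y → Z} (hg : IsVFunctor b c g) :
    fStar c (g ∘ f) = dComp (fStar c g) (fStar b f) :=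
  ((isDist_fStar c hg).dComp_fStar f).symm

theorem DenseF.fStar_dComp_fCostar {X Y : Type u} {b : VCatStr V Y} {f : X → Y}
    (hf : DenseF b f) : dComp (fStar b f) (fCostar b f) = b.hom :=
  funext₂ hf

theorem stmt6_general (Φ : DistClass V) (hΦ : DistAx Φ) {X Y Z : Type u}
    (a : VCatStr V X) (b : VCatStr V Y) (c : VCatStr V Z)
    (f : X → Y) (g : Y → Z) (h : X → Z)
    (hf : IsVFunctor a b f) (hg : IsVFunctor b c g)
    (htri : VEquiv c (g ∘ f) h) :
    (PhiDense Φ a b f → PhiDense Φ b c g → PhiDense Φ a c h) ∧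
    (PhiDense Φ a c h → FullyFaithful b c g → PhiDense Φ a b f) ∧
    (PhiDense Φ a c h → DenseF b f → PhiDense Φ b c g) := by
  have hgf : fStar c h = fStar c (g ∘ f) := (fStar_eq_of_vEquiv c htri).symm
  have hgf_dist : IsDist a c (fStar c (g ∘ f)) := isDist_fStar c (hg.comp hf)
  unfold PhiDense
  rw [hgf]
  refine ⟨fun hPf hPg => ?_, fun hPh hg_ff => ?_, fun hPh hf_dense => ?_⟩
  · rw [fStar_comp c f hg]
    exact hΦ.ax2_star a b c _ f (isDist_fStar c hg) hf hPg hPf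
  · have hf_eq : fStar b f = dComp (fCostar c g) (fStar c (g ∘ f)) := by
      rw [hgf_dist.fCostar_dComp]
      funext x y
      exact (hg_ff (f x) y).symm
    rw [hf_eq]
    exact hΦ.ax2_left a b c _ g hgf_dist hg hPh
  · have hg_eq : fStar c g = dComp (fStar c (g ∘ f)) (fCostar b f) := by
      rw [fStar_comp c f hg, dComp_assoc, hf_dense.fStar_dComp_fCostar,
        (isDist_fStar c hg).comp_id]
    rw [hg_eq]
    exact hΦ.ax2_right a b c _ f hgf_dist hf hPh

/-- Composition and cancellation of `Φ`-dense `V`-functors for a triangle `g ∘ f ≅ h`. -/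
theorem stmt6 (Φ : DistClass V) (hΦ : DistAx Φ) {X Y Z : Type u}
    (a : VCatStr V X) (b : VCatStr V Y) (c : VCatStr V Z)
    (f : X → Y) (g : Y → Z) (h : X → Z)
    (hf : IsVFunctor a b f) (hg : IsVFunctor b c g) (hh : IsVFunctor a c h)
    (htri : VEquiv c (g ∘ f) h) :
    (PhiDense Φ a b f → PhiDense Φ b c g → PhiDense Φ a c h) ∧
    (PhiDense Φ a c h → FullyFaithful b c g → PhiDense Φ a b f) ∧
    (PhiDense Φ a c h → DenseF b f → PhiDense Φ b c g) :=
  stmt6_general Φ hΦ a b c f g h hf hg htri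
end

section
/- Let V be a commutative unital quantale and Φ a class of V-distributors satisfying (Ax1)–(Ax3). For every V-category (X,a), the V-category ΦX is Φ-cocomplete; more precisely, the map (y^Φ_X)^{-1} : ΦΦX → ΦX sending Ψ to Ψ ∘ (y^Φ_X)_* (elementwise, x ↦ ⨆ ψ ∈ ΦX, ψ x ⊗ Ψ ψ) is a well-defined V-functor which is both a left adjoint and a left inverse of y^Φ_{ΦX} : ΦX → ΦΦX. -/
universe u

variable {V : Type u} [CommQuantale V]

/-!
Weighted colimits in `ΦX` are computed as in `PX`: the colimit of `h : Y → ΦX` weighted by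
`φ(-, z)` is `x ↦ ⨆ y, h y x ⊗ φ y z`. By Yoneda this presheaf is the composite
`φ(-, z) ∘ h^* ∘ (y_X)_*`, which lies in `Φ` by (Ax2), because `(y_X)_* ∈ Φ` by (Ax3) and
`φ(-, z) = φ ∘ z^* ∈ Φ`. The map `(y^Φ_X)⁻¹` is the case `h = id`, weighted by `Ψ`; it is left
inverse to the Yoneda embedding by the co-Yoneda formula `⨆ χ, χ x ⊗ [χ, ψ] = ψ x`, and the
unit of the adjunction is the inequality `Ψ ψ ≤ [ψ, ⨆ χ, χ ⊗ Ψ χ]`.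
-/

instance CommQuantale.isQuantale : IsQuantale V where
  mul_sSup_distrib := CommQuantale.mul_sSup
  sSup_mul_distrib s y := by
    simp_rw [mul_comm _ y]
    exact CommQuantale.mul_sSup y s

theorem mul_qhom_le (u v : V) : u * qhom u v ≤ v := le_qhom_iff.mp le_rfl

section WeightedSup

variable {X Y : Type u}

/-- The colimit in `PX` of `h : Y → PX` weighted by the presheaf `w` on `Y`. -/
def weightedSup (h : Y → X → V) (w : Y → V) : X → V := fun x => ⨆ y, h y x * w y

theorem isPresheaf_weightedSup {a : VCatStr V X} {h : Y → X → V} (hh : ∀ y, IsPresheaf a (h y))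
    (w : Y → V) : IsPresheaf a (weightedSup h w) := by
  intro x' x
  rw [weightedSup, Quantale.mul_iSup_distrib]
  exact iSup_mono fun y => (mul_assoc _ _ _).symm.trans_le (mul_mono_left' (hh y x' x) _)

theorem funCat_hom_weightedSup (h : Y → X → V) (w : Y → V) (χ : X → V) :
    (funCat V X).hom (weightedSup h w) χ = ⨅ y, qhom (w y) ((funCat V X).hom (h y) χ) := by
  refine eq_of_forall_le_iff fun t => ?_
  simp only [funCat, weightedSup, le_iInf_iff, le_qhom_iff, Quantale.iSup_mul_distrib,
    iSup_le_iff, mul_assoc]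
  exact forall_comm

theorem le_funCat_hom_weightedSup (h : Y → X → V) (w : Y → V) (y : Y) :
    w y ≤ (funCat V X).hom (h y) (weightedSup h w) :=
  le_iInf fun x => le_qhom_iff.mpr (le_iSup (fun y' => h y' x * w y') y)

theorem funCat_hom_le_weightedSup (h : Y → X → V) (w w' : Y → V) :
    (funCat V Y).hom w w' ≤ (funCat V X).hom (weightedSup h w) (weightedSup h w') := by
  rw [funCat_hom_weightedSup]
  exact iInf_mono fun y =>
    le_qhom_iff.mpr ((mul_qhom_le _ _).trans (le_funCat_hom_weightedSup h w' y))

theorem weightedSup_funCat_hom_self (h : Y → X → V) (y₀ : Y) :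
    weightedSup h (fun y => (funCat V X).hom (h y) (h y₀)) = h y₀ := by
  funext x
  apply le_antisymm
  · exact iSup_le fun y => (mul_mono_right' _ (iInf_le _ x)).trans (mul_qhom_le _ _)
  · refine le_iSup_of_le y₀ ?_
    calc h y₀ x = h y₀ x * 1 := (mul_one _).symm
      _ ≤ _ := mul_mono_right' _ ((funCat V X).refl _)

end WeightedSup

theorem funCat_hom_yoneda {X : Type u} {a : VCatStr V X} {ψ : X → V} (hψ : IsPresheaf a ψ)
    (x : X) : (funCat V X).hom (fun x' => a.hom x' x) ψ = ψ x := by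
  apply le_antisymm
  · calc (funCat V X).hom (fun x' => a.hom x' x) ψ
        ≤ qhom (a.hom x x) (ψ x) := iInf_le _ x
      _ = 1 * qhom (a.hom x x) (ψ x) := (one_mul _).symm
      _ ≤ a.hom x x * qhom (a.hom x x) (ψ x) := mul_mono_left' (a.refl x) _
      _ ≤ ψ x := mul_qhom_le _ _
  · exact le_iInf fun x' => le_qhom_iff.mpr (hψ x' x)

theorem IsPresheaf.isDist {X : Type u} {a : VCatStr V X} {ψ : X → V} (hψ : IsPresheaf a ψ) :
    IsDist a (unitCat V) (fun x _ => ψ x) :=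
  ⟨fun x' x _ => hψ x' x, fun _ _ _ => (mul_one _).le⟩

theorem fStar_isDist {X Y : Type u} {a : VCatStr V X} {b : VCatStr V Y} {f : X → Y}
    (hf : IsVFunctor a b f) : IsDist a b (fStar b f) :=
  ⟨fun x' x _ => (mul_mono_left' (hf x' x) _).trans (b.comp _ _ _),
    fun _ _ _ => b.comp _ _ _⟩

theorem dComp_fCostar_fStar {X Y Z C : Type u} (c : VCatStr V C) (f : X → C) (h : Y → C)
    (ω : Y → Z → V) :
    dComp (dComp ω (fCostar c h)) (fStar c f) = fun x z => ⨆ y, c.hom (f x) (h y) * ω y z := by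
  funext x z
  simp only [dComp, fStar, fCostar]
  apply le_antisymm
  · refine iSup_le fun p => ?_
    rw [Quantale.mul_iSup_distrib]
    exact iSup_mono fun y => (mul_assoc _ _ _).symm.trans_le (mul_mono_left' (c.comp _ _ _) _)
  · refine iSup_le fun y => le_iSup_of_le (h y) (mul_mono_right' _ (le_iSup_of_le y ?_))
    exact (one_mul _).symm.trans_le (mul_mono_left' (c.refl _) _)

theorem yPhi_isVFunctor (Φ : DistClass V) (hΦ : DistAx Φ) {X : Type u} (a : VCatStr V X) :
    IsVFunctor a (phiCat Φ a) (yPhi Φ hΦ a) :=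
  fun x x' => le_iInf fun x'' => le_qhom_iff.mpr (a.comp x'' x x')

theorem phiCat_hom_yPhi (Φ : DistClass V) (hΦ : DistAx Φ) {X : Type u} (a : VCatStr V X)
    (x : X) (ψ : PhiCarrier Φ a) : (phiCat Φ a).hom (yPhi Φ hΦ a x) ψ = ψ.1 x :=
  funCat_hom_yoneda ψ.2.1 x

namespace DistAx

variable {Φ : DistClass V}

theorem fStar_yPhi_mem (hΦ : DistAx Φ) {X : Type u} (a : VCatStr V X) :
    Φ a (phiCat Φ a) (fStar (phiCat Φ a) (yPhi Φ hΦ a)) := by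
  refine hΦ.ax3 _ _ _ (fStar_isDist (yPhi_isVFunctor Φ hΦ a)) fun ψ => ?_
  simp only [fStar, phiCat_hom_yPhi]
  exact ψ.2.2

theorem inPhi_apply_right (hΦ : DistAx Φ) {Y Z : Type u} {b : VCatStr V Y} {c : VCatStr V Z}
    {φ : Y → Z → V} (hd : IsDist b c φ) (hφ : Φ b c φ) (z : Z) : InPhi Φ b (fun y => φ y z) := by
  have h := hΦ.ax2_left b (unitCat V) c φ (fun _ => z) hd (fun _ _ => c.refl z) hφ
  have he : dComp (fCostar c fun _ => z) φ = fun y (_ : PUnit) => φ y z := by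
    funext y _
    apply le_antisymm
    · exact iSup_le fun z' => hd.2 y z' z
    · calc φ y z = φ y z * 1 := (mul_one _).symm
        _ ≤ φ y z * c.hom z z := mul_mono_right' _ (c.refl z)
        _ ≤ _ := le_iSup (fun z' => φ y z' * c.hom z' z) z
  rwa [he] at h

theorem inPhi_weightedSup (hΦ : DistAx Φ) {X Y : Type u} {a : VCatStr V X} {b : VCatStr V Y}
    {h : Y → PhiCarrier Φ a} (hh : IsVFunctor b (phiCat Φ a) h) {w : Y → V}
    (hw : IsPresheaf b w) (hwΦ : InPhi Φ b w) : InPhi Φ a (weightedSup (fun y => (h y).1) w) := by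
  have hθ : IsDist (phiCat Φ a) (unitCat V) (dComp (fun y _ => w y) (fCostar (phiCat Φ a) h)) :=
    (isPresheaf_weightedSup (fun y χ' χ => (phiCat Φ a).comp χ' χ (h y)) w).isDist
  have h' := hΦ.ax2_star a (phiCat Φ a) (unitCat V) _ (yPhi Φ hΦ a) hθ
    (yPhi_isVFunctor Φ hΦ a) (hΦ.ax2_right b _ _ _ h hw.isDist hh hwΦ) (hΦ.fStar_yPhi_mem a)
  rw [dComp_fCostar_fStar] at h'
  simp only [phiCat_hom_yPhi] at h'
  exact h'

end DistAx

def phiColim {Φ : DistClass V} (hΦ : DistAx Φ) {X Y : Type u} {a : VCatStr V X}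
    (b : VCatStr V Y) (h : Y → PhiCarrier Φ a) (hh : IsVFunctor b (phiCat Φ a) h)
    (w : PhiCarrier Φ b) : PhiCarrier Φ a :=
  ⟨weightedSup (fun y => (h y).1) w.1, isPresheaf_weightedSup (fun y => (h y).2.1) w.1,
    hΦ.inPhi_weightedSup hh w.2.1 w.2.2⟩

/-- `ΦX` is `Φ`-cocomplete, with `Sup = (y^Φ_X)⁻¹ : ΦΦX → ΦX`, `Ψ ↦ Ψ ∘ (y^Φ_X)_*`,
a left adjoint and left inverse of `y^Φ_{ΦX}`. -/
theorem stmt11 (Φ : DistClass V) (hΦ : DistAx Φ) {X : Type u} (a : VCatStr V X) :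
    PhiCocomplete Φ (phiCat Φ a) ∧
    ∃ S : PhiCarrier Φ (phiCat Φ a) → PhiCarrier Φ a,
      (∀ Ψ x, (S Ψ).1 x = ⨆ ψ : PhiCarrier Φ a, ψ.1 x * Ψ.1 ψ) ∧
      IsVFunctor (phiCat Φ (phiCat Φ a)) (phiCat Φ a) S ∧
      (∀ Ψ, (1 : V) ≤ (phiCat Φ (phiCat Φ a)).hom Ψ (yPhi Φ hΦ (phiCat Φ a) (S Ψ))) ∧
      (∀ ψ, (1 : V) ≤ (phiCat Φ a).hom (S (yPhi Φ hΦ (phiCat Φ a) ψ)) ψ) ∧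
      (∀ ψ, S (yPhi Φ hΦ (phiCat Φ a) ψ) = ψ) := by
  refine ⟨fun Y Z b c φ h hd hφ hh => ?_, ?_⟩
  · let w : Z → PhiCarrier Φ b := fun z =>
      ⟨fun y => φ y z, fun y' y => hd.1 y' y z, hΦ.inPhi_apply_right hd hφ z⟩
    refine ⟨fun z => phiColim hΦ b h hh (w z), fun z z' => ?_,
      fun z χ => funCat_hom_weightedSup _ _ _⟩
    exact (le_iInf fun y => le_qhom_iff.mpr (hd.2 y z z')).trans (funCat_hom_le_weightedSup _ _ _)
  · let S := phiColim hΦ (phiCat Φ a) (fun ψ => ψ) (fun _ _ => le_rfl)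
    have hS : ∀ ψ, S (yPhi Φ hΦ (phiCat Φ a) ψ) = ψ := fun ψ =>
      Subtype.ext (weightedSup_funCat_hom_self Subtype.val ψ)
    refine ⟨S, fun _ _ => rfl, fun Ψ Ψ' => funCat_hom_le_weightedSup _ _ _, fun Ψ => ?_,
      fun ψ => (hS ψ).symm ▸ (phiCat Φ a).refl ψ, hS⟩
    exact le_iInf fun ψ => le_qhom_iff.mpr
      ((mul_one _).trans_le (le_funCat_hom_weightedSup _ _ ψ))
end
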